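/- arXiv:2510.13512 — 7 statements merged into one kernel-verified Lean document; each statement's English description precedes it below -/
import Mathlib

section
/- Let B ≥ 0, let α ∈ (1/2, 1), and define f(x) = log(α·σ(x) + (1−α)·(1−σ(x))) for x ∈ [−B, B], where σ(x) = 1/(1+e^{−x}) is the sigmoid function. Then for any a, b ∈ [−B, B], |f(a) − f(b)| ≤ σ(B)·|a − b|. -/
noncomputable def sigmoid (x : ℝ) : ℝ := 1 / (1 + Real.exp (-x))

/-!
The derivative of `f` is `(2α - 1) σ (1 - σ) / (α σ + (1 - α)(1 - σ))`. Since the denominator is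
at least `(2α - 1) σ`, this is at most `1 - σ(x) = σ(-x)`, which is at most `σ(B)` for `x ≥ -B`;
the mean value inequality finishes the proof.
-/

theorem sigmoid_eq_real_sigmoid : sigmoid = Real.sigmoid := by
  funext x
  rw [sigmoid, Real.sigmoid_def, one_div]

namespace Real

/-- Probability that randomized response with retention probability `α` reports the label `1`,
when the true label is `1` with probability `σ(x)`. -/
noncomputable def randomizedResponseProb (α x : ℝ) : ℝ :=
  α * sigmoid x + (1 - α) * (1 - sigmoid x)

variable {α : ℝ}

theorem randomizedResponseProb_pos (h₀ : 0 ≤ α) (h₁ : α ≤ 1) (x : ℝ) :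
    0 < randomizedResponseProb α x := by
  have hσ₀ := sigmoid_pos x
  have hσ₁ : 0 < 1 - sigmoid x := sub_pos.2 (sigmoid_lt_one x)
  unfold randomizedResponseProb
  nlinarith [mul_pos hσ₀ hσ₁, mul_nonneg h₀ (mul_nonneg hσ₀.le hσ₀.le),
    mul_nonneg (sub_nonneg.2 h₁) (mul_nonneg hσ₁.le hσ₁.le)]

theorem hasDerivAt_randomizedResponseProb (x : ℝ) :
    HasDerivAt (randomizedResponseProb α) ((2 * α - 1) * (sigmoid x * (1 - sigmoid x))) x := by
  have hσ := hasDerivAt_sigmoid x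
  exact ((hσ.const_mul α).add (((hasDerivAt_const x 1).sub hσ).const_mul (1 - α))).congr_deriv
    (by ring)

theorem hasDerivAt_log_randomizedResponseProb (h₀ : 0 ≤ α) (h₁ : α ≤ 1) (x : ℝ) :
    HasDerivAt (fun y ↦ log (randomizedResponseProb α y))
      ((2 * α - 1) * (sigmoid x * (1 - sigmoid x)) / randomizedResponseProb α x) x :=
  (hasDerivAt_randomizedResponseProb x).log (randomizedResponseProb_pos h₀ h₁ x).ne'

theorem abs_deriv_log_randomizedResponseProb_le (h₀ : 1 / 2 ≤ α) (h₁ : α ≤ 1) (x : ℝ) :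
    |(2 * α - 1) * (sigmoid x * (1 - sigmoid x)) / randomizedResponseProb α x| ≤ sigmoid (-x) := by
  have hp := randomizedResponseProb_pos (by linarith) h₁ x
  have hσ₀ := sigmoid_pos x
  have hσ₁ : 0 < 1 - sigmoid x := sub_pos.2 (sigmoid_lt_one x)
  have hnum : 0 ≤ (2 * α - 1) * (sigmoid x * (1 - sigmoid x)) :=
    mul_nonneg (by linarith) (mul_pos hσ₀ hσ₁).le
  rw [sigmoid_neg, abs_of_nonneg (div_nonneg hnum hp.le), div_le_iff₀ hp]
  unfold randomizedResponseProb
  nlinarith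

end Real

theorem stmt_0_general (B : ℝ) (α : ℝ) (hα : α ∈ Set.Ioo (1/2 : ℝ) 1)
    (f : ℝ → ℝ)
    (hf : ∀ x, f x = Real.log (α * sigmoid x + (1 - α) * (1 - sigmoid x)))
    (a b : ℝ) (ha : a ∈ Set.Icc (-B) B) (hb : b ∈ Set.Icc (-B) B) :
    |f a - f b| ≤ sigmoid B * |a - b| := by
  obtain ⟨hα₀, hα₁⟩ := hα
  have hf' : f = fun y ↦ Real.log (Real.randomizedResponseProb α y) := by
    funext y
    rw [hf, sigmoid_eq_real_sigmoid, Real.randomizedResponseProb]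
  have hderiv x := Real.hasDerivAt_log_randomizedResponseProb (α := α) (by linarith) hα₁.le x
  have hbound : ∀ x ∈ Set.Icc (-B) B,
      ‖(2 * α - 1) * (Real.sigmoid x * (1 - Real.sigmoid x)) /
        Real.randomizedResponseProb α x‖ ≤ sigmoid B := fun x hx ↦ by
    rw [Real.norm_eq_abs, sigmoid_eq_real_sigmoid]
    exact (Real.abs_deriv_log_randomizedResponseProb_le hα₀.le hα₁.le x).trans
      (Real.sigmoid_le (by linarith [hx.1]))
  rw [hf']
  exact (convex_Icc (-B) B).norm_image_sub_le_of_norm_hasDerivWithin_le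
    (fun x _ ↦ (hderiv x).hasDerivWithinAt) hbound hb ha

theorem stmt_0 (B : ℝ) (hB : 0 ≤ B) (α : ℝ) (hα : α ∈ Set.Ioo (1/2 : ℝ) 1)
    (f : ℝ → ℝ)
    (hf : ∀ x, f x = Real.log (α * sigmoid x + (1 - α) * (1 - sigmoid x)))
    (a b : ℝ) (ha : a ∈ Set.Icc (-B) B) (hb : b ∈ Set.Icc (-B) B) :
    |f a - f b| ≤ sigmoid B * |a - b| :=
  stmt_0_general B α hα f hf a b ha hb
end

section
/- Let σ(x) = 1/(1+e^{−x}) be the sigmoid function, let α ∈ (1/2, 1], and define f(x) = (2σ(x) − 1)·(2α − 1). Then for any B ≥ 0 and any x, x′ ∈ [−B, B], |x − x′| ≤ ((e^{−B} + 2 + e^{B}) / (2·(2α − 1))) · |f(x) − f(x′)|. -/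
/-! The derivative of the sigmoid is `σ (1 - σ) = 1 / (2 + 2 cosh x)`, which on `[-B, B]` is at
least `1 / (e^{-B} + 2 + e^B)`; the mean value inequality turns this into a lower Lipschitz bound
for `σ`, and `f` is `σ` rescaled by `2 (2α - 1)`. -/

open Set

namespace Real

theorem sigmoid_mul_one_sub_sigmoid (x : ℝ) :
    sigmoid x * (1 - sigmoid x) = (2 + 2 * cosh x)⁻¹ := by
  have hprod : (1 + exp (-x)) * (1 + exp x) = 2 + 2 * cosh x := by
    rw [cosh_eq, exp_neg]
    field_simp
    ring
  rw [← sigmoid_neg, sigmoid_def, sigmoid_def, neg_neg, ← mul_inv, hprod]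

theorem mul_sub_le_sigmoid_sub {B x y : ℝ} (hx : x ∈ Icc (-B) B) (hy : y ∈ Icc (-B) B)
    (hxy : x ≤ y) : (2 + 2 * cosh B)⁻¹ * (y - x) ≤ sigmoid y - sigmoid x := by
  refine (convex_Icc (-B) B).mul_sub_le_image_sub_of_le_deriv continuous_sigmoid.continuousOn
    differentiable_sigmoid.differentiableOn (fun z hz => ?_) x hx y hy hxy
  rw [interior_Icc] at hz
  have hcosh : cosh z ≤ cosh B :=
    cosh_le_cosh.mpr ((abs_le.mpr ⟨hz.1.le, hz.2.le⟩).trans (le_abs_self B))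
  rw [(hasDerivAt_sigmoid z).deriv, sigmoid_mul_one_sub_sigmoid]
  gcongr

theorem abs_sub_le_mul_abs_sigmoid_sub {B x y : ℝ} (hx : x ∈ Icc (-B) B)
    (hy : y ∈ Icc (-B) B) : |x - y| ≤ (2 + 2 * cosh B) * |sigmoid x - sigmoid y| := by
  have hpos : 0 < 2 + 2 * cosh B := by positivity
  wlog hxy : y ≤ x generalizing x y
  · rw [abs_sub_comm, abs_sub_comm (sigmoid x)]
    exact this hy hx (le_of_not_ge hxy)
  rw [abs_of_nonneg (sub_nonneg.mpr hxy), abs_of_nonneg (sub_nonneg.mpr (sigmoid_le hxy)),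
    ← inv_mul_le_iff₀ hpos]
  exact mul_sub_le_sigmoid_sub hy hx hxy

end Real

theorem stmt_3_general (α : ℝ) (hα : α ∈ Set.Ioc (1/2 : ℝ) 1)
    (f : ℝ → ℝ) (hf : ∀ x, f x = (2 * sigmoid x - 1) * (2 * α - 1))
    (B : ℝ) (x x' : ℝ) (hx : x ∈ Set.Icc (-B) B) (hx' : x' ∈ Set.Icc (-B) B) :
    |x - x'| ≤ (Real.exp (-B) + 2 + Real.exp B) / (2 * (2 * α - 1)) * |f x - f x'| := by
  have hscale : 0 < 2 * (2 * α - 1) := by linarith [hα.1]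
  have hsigmoid : sigmoid = Real.sigmoid := funext fun _ => one_div _
  have hconst : Real.exp (-B) + 2 + Real.exp B = 2 + 2 * Real.cosh B := by
    rw [Real.cosh_eq]; ring
  have hdiff : |f x - f x'| = 2 * (2 * α - 1) * |Real.sigmoid x - Real.sigmoid x'| := by
    rw [hf, hf, hsigmoid, ← abs_of_pos hscale, ← abs_mul]
    ring_nf
  rw [hdiff, hconst, div_mul_eq_mul_div, mul_div_assoc, mul_div_cancel_left₀ _ hscale.ne']
  exact Real.abs_sub_le_mul_abs_sigmoid_sub hx hx'

theorem stmt_3 (α : ℝ) (hα : α ∈ Set.Ioc (1/2 : ℝ) 1)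
    (f : ℝ → ℝ) (hf : ∀ x, f x = (2 * sigmoid x - 1) * (2 * α - 1))
    (B : ℝ) (hB : 0 ≤ B) (x x' : ℝ) (hx : x ∈ Set.Icc (-B) B) (hx' : x' ∈ Set.Icc (-B) B) :
    |x - x'| ≤ (Real.exp (-B) + 2 + Real.exp B) / (2 * (2 * α - 1)) * |f x - f x'| :=
  stmt_3_general α hα f hf B x x' hx hx'
end

section
/- Let (Ω, F, P) be a probability space with a filtration (F_t)_{t=0}^{T}, and let (X_t)_{t=1}^{T} be a sequence of real-valued random variables such that X_t is F_t-measurable and exp(X_t) is integrable for each t. Then for every δ ∈ (0, 1), with probability at least 1 − δ, for all T′ ≤ T simultaneously, Σ_{t=1}^{T′} X_t ≤ Σ_{t=1}^{T′} log E[exp(X_t) | F_{t−1}] + log(1/δ). -/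
/-!
With `Z t = E[exp (X t) | ℱ (t - 1)]`, which is a.s. positive, the products
`M n = ∏_{t ≤ n} exp (X t) / Z t` form a nonnegative martingale with `M 0 = 1`, and the
inequality fails for some `T' ≤ T` exactly when `M T' > 1 / δ`; Doob's maximal inequality bounds
the probability of that by `δ`. The technical point is integrability of `M n`, since `1 / Z t`
need not be bounded: the pull-out property `E[g f] = E[g E[f | m]]` for `m`-measurable `g ≥ 0`
is proved for the truncations `min g n` and passed to the limit by monotone convergence.
-/

open MeasureTheory Filter ProbabilityTheory

section

variable {Ω : Type*} {m m0 : MeasurableSpace Ω} {μ : Measure Ω}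

theorem condExp_pos_of_ae_pos (hm : m ≤ m0) [SigmaFinite (μ.trim hm)] {f : Ω → ℝ}
    (hf : Integrable f μ) (hf0 : ∀ᵐ ω ∂μ, 0 < f ω) : ∀ᵐ ω ∂μ, 0 < μ[f|m] ω := by
  set A := {ω | μ[f|m] ω ≤ 0}
  have hA : MeasurableSet[m] A :=
    (stronglyMeasurable_condExp (m := m) (μ := μ) (f := f)).measurable measurableSet_Iic
  have hfA : ∫ ω in A, f ω ∂μ = 0 := by
    refine le_antisymm ?_ (setIntegral_nonneg_ae (hm A hA) (hf0.mono fun ω h _ => h.le))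
    rw [← setIntegral_condExp hm hf hA]
    exact setIntegral_nonpos (hm A hA) fun ω hω => hω
  have hμA : μ A = 0 := by
    rw [setIntegral_eq_zero_iff_of_nonneg_ae (ae_restrict_of_ae (hf0.mono fun ω h => h.le))
      hf.integrableOn] at hfA
    have : ∀ᵐ ω ∂μ.restrict A, False := by
      filter_upwards [hfA, ae_restrict_of_ae hf0] with ω h0 hpos
      exact hpos.ne' h0
    rwa [← Measure.restrict_eq_zero, ← ae_eq_bot, ← eventually_false_iff_eq_bot]
  rw [ae_iff]
  simpa only [not_lt] using hμA

theorem tendsto_lintegral_ofReal_min_mul {g h : Ω → ℝ} (hg : AEMeasurable g μ)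
    (hh : AEMeasurable h μ) (h0 : 0 ≤ᵐ[μ] h) :
    Tendsto (fun n : ℕ => ∫⁻ ω, ENNReal.ofReal (min (g ω) n * h ω) ∂μ) atTop
      (nhds (∫⁻ ω, ENNReal.ofReal (g ω * h ω) ∂μ)) := by
  refine lintegral_tendsto_of_tendsto_of_monotone (fun n => by fun_prop) ?_ ?_
  · filter_upwards [h0] with ω hω a b hab
    exact ENNReal.ofReal_le_ofReal
      (mul_le_mul_of_nonneg_right (min_le_min_left _ (by exact_mod_cast hab)) hω)
  · refine ae_of_all _ fun ω => tendsto_atTop_of_eventually_const (i₀ := ⌈g ω⌉₊) fun n hn => ?_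
    rw [min_eq_left ((Nat.le_ceil _).trans (by exact_mod_cast hn))]

theorem lintegral_ofReal_mul_condExp (hm : m ≤ m0) [SigmaFinite (μ.trim hm)] {f g : Ω → ℝ}
    (hf : Integrable f μ) (hf0 : 0 ≤ᵐ[μ] f) (hg : StronglyMeasurable[m] g) (hg0 : 0 ≤ᵐ[μ] g) :
    ∫⁻ ω, ENNReal.ofReal (g ω * f ω) ∂μ = ∫⁻ ω, ENNReal.ofReal (g ω * μ[f|m] ω) ∂μ := by
  have hgm : StronglyMeasurable[m0] g := hg.mono hm
  have htrunc (n : ℕ) : ∫⁻ ω, ENNReal.ofReal (min (g ω) n * f ω) ∂μ =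
      ∫⁻ ω, ENNReal.ofReal (min (g ω) n * μ[f|m] ω) ∂μ := by
    have hgn : StronglyMeasurable[m] fun ω => min (g ω) n :=
      (hg.measurable.min measurable_const).stronglyMeasurable
    have hbound : ∀ᵐ ω ∂μ, ‖min (g ω) n‖ ≤ n := by
      filter_upwards [hg0] with ω hω
      rw [Real.norm_of_nonneg (le_min hω n.cast_nonneg)]
      exact min_le_right _ _
    have hint := hf.bdd_mul (hgn.mono hm).aestronglyMeasurable hbound
    have hint' := (integrable_condExp (m := m) (f := f)).bdd_mul
      (hgn.mono hm).aestronglyMeasurable hbound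
    rw [← ofReal_integral_eq_lintegral_ofReal hint, ← ofReal_integral_eq_lintegral_ofReal hint']
    · rw [← integral_condExp hm]
      exact congrArg _ (integral_congr_ae (condExp_mul_of_stronglyMeasurable_left hgn hint hf))
    · filter_upwards [hg0, condExp_nonneg hf0 (m := m)] with ω h1 h2
      exact mul_nonneg (le_min h1 n.cast_nonneg) h2
    · filter_upwards [hg0, hf0] with ω h1 h2
      exact mul_nonneg (le_min h1 n.cast_nonneg) h2
  exact tendsto_nhds_unique
    ((tendsto_lintegral_ofReal_min_mul hgm.aemeasurable hf.aemeasurable hf0).congr htrunc)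
    (tendsto_lintegral_ofReal_min_mul hgm.aemeasurable
      (stronglyMeasurable_condExp.mono hm).aemeasurable (condExp_nonneg hf0))

theorem integrable_mul_of_integrable_mul_condExp (hm : m ≤ m0) [SigmaFinite (μ.trim hm)]
    {f g : Ω → ℝ} (hf : Integrable f μ) (hf0 : 0 ≤ᵐ[μ] f) (hg : StronglyMeasurable[m] g)
    (hg0 : 0 ≤ᵐ[μ] g) (hgf : Integrable (fun ω => g ω * μ[f|m] ω) μ) :
    Integrable (fun ω => g ω * f ω) μ := by
  have hgf0 : 0 ≤ᵐ[μ] fun ω => g ω * f ω := by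
    filter_upwards [hg0, hf0] with ω h1 h2 using mul_nonneg h1 h2
  have hgcf0 : 0 ≤ᵐ[μ] fun ω => g ω * μ[f|m] ω := by
    filter_upwards [hg0, condExp_nonneg hf0 (m := m)] with ω h1 h2 using mul_nonneg h1 h2
  refine ⟨(hg.mono hm).aestronglyMeasurable.mul hf.1, ?_⟩
  rw [hasFiniteIntegral_iff_ofReal hgf0, lintegral_ofReal_mul_condExp hm hf hf0 hg hg0]
  exact (hasFiniteIntegral_iff_ofReal hgcf0).1 hgf.2

open Real in
/-- Written as `exp (Y - log Z)` rather than `exp Y / Z` so that it is positive everywhere, not only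
where `Z > 0`. -/
theorem condExp_exp_sub_log_condExp [IsFiniteMeasure μ] (hm : m ≤ m0) {Y : Ω → ℝ}
    (hY : Integrable (fun ω => exp (Y ω)) μ) :
    Integrable (fun ω => exp (Y ω - log (μ[fun ω => exp (Y ω)|m] ω))) μ ∧
      μ[fun ω => exp (Y ω - log (μ[fun ω => exp (Y ω)|m] ω))|m] =ᵐ[μ] 1 := by
  set Z := μ[fun ω => exp (Y ω)|m]
  have hZ : ∀ᵐ ω ∂μ, 0 < Z ω := condExp_pos_of_ae_pos hm hY (ae_of_all _ fun ω => exp_pos _)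
  have hZinv : StronglyMeasurable[m] fun ω => (Z ω)⁻¹ :=
    (stronglyMeasurable_condExp (m := m) (μ := μ)).measurable.inv.stronglyMeasurable
  have heq : (fun ω => exp (Y ω - log (Z ω))) =ᵐ[μ] fun ω => (Z ω)⁻¹ * exp (Y ω) := by
    filter_upwards [hZ] with ω hω
    rw [exp_sub, exp_log hω, div_eq_inv_mul]
  have hone : (fun ω => (Z ω)⁻¹ * Z ω) =ᵐ[μ] 1 := by
    filter_upwards [hZ] with ω hω using inv_mul_cancel₀ hω.ne'
  have hint : Integrable (fun ω => (Z ω)⁻¹ * exp (Y ω)) μ :=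
    integrable_mul_of_integrable_mul_condExp hm hY (ae_of_all _ fun ω => (exp_pos _).le) hZinv
      (hZ.mono fun ω hω => inv_nonneg.2 hω.le) ((integrable_const 1).congr hone.symm)
  refine ⟨hint.congr heq.symm, ?_⟩
  calc μ[fun ω => exp (Y ω - log (Z ω))|m]
      =ᵐ[μ] μ[fun ω => (Z ω)⁻¹ * exp (Y ω)|m] := condExp_congr_ae heq
    _ =ᵐ[μ] (fun ω => (Z ω)⁻¹) * Z := condExp_mul_of_stronglyMeasurable_left hZinv hint hY
    _ =ᵐ[μ] 1 := hone

theorem martingale_prod_Icc [IsFiniteMeasure μ] {ℱ : Filtration ℕ m0} {R : ℕ → Ω → ℝ}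
    (hR : StronglyAdapted ℱ R) (hR0 : ∀ t, 0 ≤ᵐ[μ] R t) (hRint : ∀ t, Integrable (R t) μ)
    (hcond : ∀ t, μ[R (t + 1)|ℱ t] =ᵐ[μ] 1) :
    Martingale (fun n ω => ∏ t ∈ Finset.Icc 1 n, R t ω) ℱ μ := by
  set M : ℕ → Ω → ℝ := fun n ω => ∏ t ∈ Finset.Icc 1 n, R t ω
  have hM : StronglyAdapted ℱ M := fun n =>
    (Finset.measurable_prod _ fun t ht =>
      ((hR t).mono (ℱ.mono (Finset.mem_Icc.1 ht).2)).measurable).stronglyMeasurable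
  have hsucc (n : ℕ) : M (n + 1) = M n * R (n + 1) :=
    funext fun ω => Finset.prod_Icc_succ_top (by omega) _
  have hM0 (n : ℕ) : 0 ≤ᵐ[μ] M n := by
    filter_upwards [ae_all_iff.2 hR0] with ω hω using Finset.prod_nonneg fun t _ => hω t
  have hpull (n : ℕ) : M n * μ[R (n + 1)|ℱ n] =ᵐ[μ] M n := by
    filter_upwards [hcond n] with ω hω
    simp [hω]
  have hint (n : ℕ) : Integrable (M n) μ := by
    induction n with
    | zero => simp [M]
    | succ n ih =>
      rw [hsucc]
      exact integrable_mul_of_integrable_mul_condExp (ℱ.le n) (hRint _) (hR0 _) (hM n) (hM0 n)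
        (ih.congr (hpull n).symm)
  refine martingale_nat hM hint fun n => ?_
  rw [hsucc]
  exact ((condExp_mul_of_stronglyMeasurable_left (hM n) (hsucc n ▸ hint (n + 1))
    (hRint _)).trans (hpull n)).symm

theorem MeasureTheory.Submartingale.mul_measureReal_exists_ge_le_integral [IsFiniteMeasure μ]
    {ℱ : Filtration ℕ m0} {M : ℕ → Ω → ℝ} (hM : Submartingale M ℱ μ) (hM0 : 0 ≤ M) {ε : ℝ}
    (hε : 0 ≤ ε) (T : ℕ) : ε * μ.real {ω | ∃ k ≤ T, ε ≤ M k ω} ≤ ∫ ω, M T ω ∂μ := by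
  set S := {ω | ∃ k ≤ T, ε ≤ M k ω}
  have hS : S = {ω | (ε.toNNReal : ℝ) ≤
      (Finset.range (T + 1)).sup' Finset.nonempty_range_add_one fun k => M k ω} := by
    ext ω
    simp [S, Finset.le_sup'_iff, Real.coe_toNNReal _ hε]
  have hmax := maximal_ineq hM hM0 (ε := ε.toNNReal) T
  rw [← hS] at hmax
  calc ε * μ.real S = (ENNReal.ofReal ε * μ S).toReal := by
        rw [ENNReal.toReal_mul, ENNReal.toReal_ofReal hε, measureReal_def]
    _ ≤ (ENNReal.ofReal (∫ ω in S, M T ω ∂μ)).toReal :=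
        ENNReal.toReal_mono ENNReal.ofReal_ne_top hmax
    _ = ∫ ω in S, M T ω ∂μ := ENNReal.toReal_ofReal (integral_nonneg fun ω => hM0 T ω)
    _ ≤ ∫ ω, M T ω ∂μ := setIntegral_le_integral (hM.integrable T) (ae_of_all _ (hM0 T))

theorem one_sub_le_measureReal_of_compl_subset [IsProbabilityMeasure μ] {s t : Set Ω}
    (hst : sᶜ ⊆ t) {δ : ℝ} (ht : μ.real t ≤ δ) : 1 - δ ≤ μ.real s := by
  have := measureReal_union_le (μ := μ) s sᶜ
  rw [Set.union_compl_self, probReal_univ] at this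
  linarith [measureReal_mono (μ := μ) hst]

end

/-- Ville-type uniform martingale exponential inequality. -/
theorem stmt_8 {Ω : Type*} {m0 : MeasurableSpace Ω} (μ : Measure Ω) [IsProbabilityMeasure μ]
    (T : ℕ) (ℱ : Filtration ℕ m0) (X : ℕ → Ω → ℝ)
    (hadapted : ∀ t, Measurable[ℱ t] (X t))
    (hint : ∀ t, Integrable (fun ω => Real.exp (X t ω)) μ)
    (δ : ℝ) (hδ : δ ∈ Set.Ioo (0:ℝ) 1) :
    1 - δ ≤ (μ {ω | ∀ T' ≤ T,
        ∑ t ∈ Finset.Icc 1 T', X t ω ≤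
          ∑ t ∈ Finset.Icc 1 T',
            Real.log ((μ[fun ω' => Real.exp (X t ω') | ℱ (t - 1)]) ω)
          + Real.log (1 / δ)}).toReal := by
  set Z : ℕ → Ω → ℝ := fun t => μ[fun ω' => Real.exp (X t ω') | ℱ (t - 1)]
  set M : ℕ → Ω → ℝ := fun n ω => ∏ t ∈ Finset.Icc 1 n, Real.exp (X t ω - Real.log (Z t ω))
  have hR (t : ℕ) := condExp_exp_sub_log_condExp (ℱ.le (t - 1)) (hint t)
  have hZ (t : ℕ) : Measurable[ℱ t] (Z t) :=
    (stronglyMeasurable_condExp.mono (ℱ.mono (t.sub_le 1))).measurable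
  have hM : Martingale M ℱ μ := martingale_prod_Icc
    (fun t => ((hadapted t).sub (hZ t).log).exp.stronglyMeasurable)
    (fun t => ae_of_all _ fun ω => (Real.exp_pos _).le) (fun t => (hR t).1)
    (fun t => (hR (t + 1)).2)
  have hM1 : ∫ ω, M T ω ∂μ = 1 := by
    simpa [M] using (hM.setIntegral_eq (Nat.zero_le T) MeasurableSet.univ).symm
  have hδinv : 0 < 1 / δ := one_div_pos.2 hδ.1
  refine one_sub_le_measureReal_of_compl_subset (t := {ω | ∃ k ≤ T, 1 / δ ≤ M k ω}) ?_ ?_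
  · intro ω hω
    simp only [Set.mem_compl_iff, Set.mem_ofPred_eq, not_forall, not_le] at hω
    obtain ⟨T', hT', hlt⟩ := hω
    refine ⟨T', hT', ?_⟩
    rw [← Real.exp_log hδinv]
    simp only [M, ← Real.exp_sum, Finset.sum_sub_distrib]
    exact (Real.exp_lt_exp.2 (by linarith)).le
  · have := hM.submartingale.mul_measureReal_exists_ge_le_integral
      (fun n ω => Finset.prod_nonneg fun t _ => (Real.exp_pos _).le) hδinv.le T
    rwa [hM1, ← le_div_iff₀' hδinv, one_div_one_div] at this
end

section
/- (Freedman's inequality.) Let δ ∈ (0, 1) and let M, v > 0 be fixed constants. Let (X_i)_{i=1}^{n} be real-valued random variables adapted to a filtration (G_i)_{i=0}^{n} such that almost surely E[X_i | G_{i−1}] = 0, |X_i| ≤ M, and Σ_{i=1}^{n} E[X_i² | G_{i−1}] ≤ v. Then with probability at least 1 − δ, Σ_{i=1}^{n} X_i ≤ √(2·v·log(1/δ)) + (2/3)·M·log(1/δ). -/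
/-!
For `0 ≤ λ` with `λM < 3`, Bernstein's bound `exp u ≤ 1 + u + u² / (2 (1 - |u|/3))` together with
`E[Xᵢ | 𝒢ᵢ₋₁] = 0` gives `E[exp (λXᵢ) | 𝒢ᵢ₋₁] ≤ exp (c(λ) E[Xᵢ² | 𝒢ᵢ₋₁])`, where
`c(λ) = λ² / (2 (1 - λM/3))`. Hence `exp (λSₖ - c(λ)Vₖ)`, with `Sₖ` the partial sums and `Vₖ` the
predictable quadratic variation, is a supermartingale started at `1`. Since `Vₙ ≤ v`, Markov's
inequality gives `P(Sₙ ≥ t) ≤ exp (c(λ)v - λt)`, and for `t = √(2vL) + 2ML/3`, `L = log (1/δ)`, the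
choice `λ = 2L/t` makes the exponent at most `-L`.
-/

open MeasureTheory Real Finset
open scoped Nat

theorem Real.exp_le_one_add_add_sq_div {u a : ℝ} (hu : |u| ≤ a) (ha : a < 3) :
    exp u ≤ 1 + u + u ^ 2 / (2 * (1 - a / 3)) := by
  have ha0 : 0 ≤ a := (abs_nonneg u).trans hu
  have hq0 : 0 ≤ a / 3 := by positivity
  have hq1 : a / 3 < 1 := by linarith
  have hsum := Real.summable_pow_div_factorial u
  -- `2 * 3 ^ n ≤ (n + 2)!` dominates the tail of the exponential series by a geometric series
  have hterm (n : ℕ) : u ^ (n + 2) / (n + 2)! ≤ u ^ 2 / 2 * (a / 3) ^ n := by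
    have hfact : (2 * 3 ^ n : ℝ) ≤ (n + 2)! := by
      rw [add_comm n]; exact_mod_cast Nat.factorial_mul_pow_le_factorial (m := 2) (n := n)
    calc u ^ (n + 2) / (n + 2)! ≤ |u| ^ (n + 2) / (n + 2)! :=
          div_le_div_of_nonneg_right ((le_abs_self _).trans_eq (abs_pow u _)) (by positivity)
      _ ≤ a ^ n * u ^ 2 / (2 * 3 ^ n) := by
        rw [pow_add, ← sq_abs u]
        gcongr
      _ = u ^ 2 / 2 * (a / 3) ^ n := by rw [div_pow]; ring
  have htail : ∑' n : ℕ, u ^ (n + 2) / (n + 2)! ≤ u ^ 2 / (2 * (1 - a / 3)) :=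
    calc _ ≤ ∑' n : ℕ, u ^ 2 / 2 * (a / 3) ^ n :=
          ((summable_nat_add_iff 2).2 hsum).tsum_le_tsum hterm
            ((summable_geometric_of_lt_one hq0 hq1).mul_left _)
      _ = _ := by rw [tsum_mul_left, tsum_geometric_of_lt_one hq0 hq1]; field_simp
  rw [exp_eq_exp_ℝ, ← (NormedSpace.expSeries_div_hasSum_exp u).tsum_eq,
    ← hsum.sum_add_tsum_nat_add 2, sum_range_succ, sum_range_one]
  simp only [pow_zero, pow_one, Nat.factorial_zero, Nat.factorial_one, Nat.cast_one, div_one]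
  linarith

noncomputable def freedmanCoeff (M l : ℝ) : ℝ := l ^ 2 / (2 * (1 - l * M / 3))

theorem freedmanCoeff_nonneg {M l : ℝ} (hlM : l * M < 3) : 0 ≤ freedmanCoeff M l :=
  div_nonneg (sq_nonneg l) (by linarith)

theorem integrable_exp_mul_of_abs_le {Ω : Type*} {m0 : MeasurableSpace Ω} {μ : Measure Ω}
    [IsFiniteMeasure μ] {Y : Ω → ℝ} {M : ℝ}
    (hY : AEStronglyMeasurable Y μ) (hbound : ∀ᵐ ω ∂μ, |Y ω| ≤ M) (l : ℝ) :
    Integrable (fun ω => exp (l * Y ω)) μ := by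
  refine .of_bound (continuous_exp.comp_aestronglyMeasurable (hY.const_mul l)) (exp (|l| * M)) ?_
  filter_upwards [hbound] with ω h
  rw [norm_of_nonneg (exp_pos _).le, exp_le_exp]
  calc l * Y ω ≤ |l| * |Y ω| := (le_abs_self _).trans_eq (abs_mul _ _)
    _ ≤ |l| * M := mul_le_mul_of_nonneg_left h (abs_nonneg l)

theorem condExp_exp_mul_le {Ω : Type*} {m m0 : MeasurableSpace Ω} {μ : Measure Ω}
    [IsFiniteMeasure μ] (hm : m ≤ m0) {Y : Ω → ℝ} {M l : ℝ} (hY : AEStronglyMeasurable Y μ)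
    (hmean : μ[Y | m] =ᵐ[μ] 0) (hbound : ∀ᵐ ω ∂μ, |Y ω| ≤ M) (hl : 0 ≤ l) (hlM : l * M < 3) :
    μ[fun ω => exp (l * Y ω) | m]
      ≤ᵐ[μ] fun ω => exp (freedmanCoeff M l * μ[fun ω' => Y ω' ^ 2 | m] ω) := by
  set c := freedmanCoeff M l
  have hYint : Integrable Y μ := .of_bound hY M (by simpa using hbound)
  have hY2int : Integrable (fun ω => Y ω ^ 2) μ := by
    refine .of_bound (hY.pow 2) (M ^ 2) ?_
    filter_upwards [hbound] with ω h
    simpa using pow_le_pow_left₀ (abs_nonneg _) h 2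
  have hquad : (fun ω => exp (l * Y ω)) ≤ᵐ[μ] (fun _ => 1) + l • Y + c • fun ω => Y ω ^ 2 := by
    filter_upwards [hbound] with ω h
    have hlY : |l * Y ω| ≤ l * M := by
      rw [abs_mul, abs_of_nonneg hl]; exact mul_le_mul_of_nonneg_left h hl
    convert exp_le_one_add_add_sq_div hlY hlM using 1
    simp only [Pi.add_apply, Pi.smul_apply, smul_eq_mul, c, freedmanCoeff]
    ring
  have hcond : μ[(fun _ => 1) + l • Y + c • fun ω => Y ω ^ 2 | m]
      =ᵐ[μ] fun ω => 1 + c * μ[fun ω' => Y ω' ^ 2 | m] ω := by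
    filter_upwards [condExp_add ((integrable_const 1).add (hYint.smul l)) (hY2int.smul c) m,
      condExp_add (integrable_const 1) (hYint.smul l) m, condExp_smul l Y m,
      condExp_smul c (fun ω => Y ω ^ 2) m, hmean] with ω h₁ h₂ h₃ h₄ h₅
    simp only [Pi.add_apply, Pi.smul_apply, smul_eq_mul, Pi.zero_apply] at *
    rw [h₁, h₂, h₃, h₄, h₅, condExp_const hm]
    ring
  filter_upwards [condExp_mono (integrable_exp_mul_of_abs_le hY hbound l)
    (((integrable_const 1).add (hYint.smul l)).add (hY2int.smul c)) hquad, hcond] with ω h₁ h₂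
  linarith [add_one_le_exp (c * μ[fun ω' => Y ω' ^ 2 | m] ω)]

theorem freedmanCoeff_mul_le {L v M : ℝ} (hL : 0 < L) (hv : 0 < v) (hM : 0 ≤ M) :
    freedmanCoeff M (2 * L / (√(2 * v * L) + 2 / 3 * M * L)) * v ≤ L := by
  set a := √(2 * v * L)
  have ha : 0 < a := by positivity
  have ha2 : a ^ 2 = 2 * v * L := sq_sqrt (by positivity)
  -- with `t = a + 2ML/3` and `λ = 2L/t`: `1 - λM/3 = a/t`, so `c(λ) v = L a / t ≤ L`
  have key : 1 - 2 * L / (a + 2 / 3 * M * L) * M / 3 = a / (a + 2 / 3 * M * L) := by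
    field_simp; ring
  rw [freedmanCoeff, key]
  field_simp
  nlinarith [mul_nonneg hM hL.le, mul_pos ha hL]

section Freedman

variable {Ω : Type*} {m0 : MeasurableSpace Ω} {μ : Measure Ω} {𝒢 : Filtration ℕ m0}
  {X : ℕ → Ω → ℝ} {M : ℝ}

noncomputable def predictableQuadVar (μ : Measure Ω) (𝒢 : Filtration ℕ m0) (X : ℕ → Ω → ℝ)
    (k : ℕ) (ω : Ω) : ℝ :=
  ∑ i ∈ Icc 1 k, μ[fun ω' => X i ω' ^ 2 | 𝒢 (i - 1)] ω

noncomputable def freedmanProcess (μ : Measure Ω) (𝒢 : Filtration ℕ m0) (X : ℕ → Ω → ℝ)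
    (c l : ℝ) (k : ℕ) (ω : Ω) : ℝ :=
  exp (l * ∑ i ∈ Icc 1 k, X i ω - c * predictableQuadVar μ 𝒢 X k ω)

theorem measurable_sum_Icc (hX : ∀ i, Measurable[𝒢 i] (X i)) {j k : ℕ} (hkj : k ≤ j) :
    Measurable[𝒢 j] fun ω => ∑ i ∈ Icc 1 k, X i ω :=
  Finset.measurable_sum _ fun i hi => (hX i).mono (𝒢.mono ((mem_Icc.1 hi).2.trans hkj)) le_rfl

theorem measurable_predictableQuadVar {j k : ℕ} (hkj : k ≤ j + 1) :
    Measurable[𝒢 j] (predictableQuadVar μ 𝒢 X k) :=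
  Finset.measurable_sum _ fun i hi =>
    stronglyMeasurable_condExp.measurable.mono (𝒢.mono (by grind)) le_rfl

theorem measurable_freedmanProcess (hX : ∀ i, Measurable[𝒢 i] (X i)) (c l : ℝ) (k : ℕ) :
    Measurable[𝒢 k] (freedmanProcess μ 𝒢 X c l k) :=
  measurable_exp.comp (((measurable_sum_Icc hX le_rfl).const_mul l).sub
    ((measurable_predictableQuadVar k.le_succ).const_mul c))

theorem predictableQuadVar_nonneg (k : ℕ) : 0 ≤ᵐ[μ] predictableQuadVar μ 𝒢 X k := by
  have h : ∀ i, 0 ≤ᵐ[μ] μ[fun ω' => X i ω' ^ 2 | 𝒢 (i - 1)] := fun i =>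
    condExp_nonneg (ae_of_all _ fun ω => sq_nonneg _)
  filter_upwards [ae_all_iff.2 h] with ω hω
  exact Finset.sum_nonneg fun i _ => hω i

theorem integrable_exp_mul_sum [IsFiniteMeasure μ] (hX : ∀ i, Measurable (X i))
    (hbound : ∀ i, ∀ᵐ ω ∂μ, |X i ω| ≤ M) (l : ℝ) (s : Finset ℕ) :
    Integrable (fun ω => exp (l * ∑ i ∈ s, X i ω)) μ := by
  refine integrable_exp_mul_of_abs_le (M := ∑ i ∈ s, M) (by fun_prop) ?_ l
  filter_upwards [ae_all_iff.2 hbound] with ω h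
  exact (abs_sum_le_sum_abs _ _).trans (sum_le_sum fun i _ => h i)

theorem integrable_freedmanProcess [IsFiniteMeasure μ] (hX : ∀ i, Measurable[𝒢 i] (X i))
    (hbound : ∀ i, ∀ᵐ ω ∂μ, |X i ω| ≤ M) {c : ℝ} (hc : 0 ≤ c) (l : ℝ) (k : ℕ) :
    Integrable (freedmanProcess μ 𝒢 X c l k) μ := by
  refine (integrable_exp_mul_sum (fun i => (hX i).mono (𝒢.le i) le_rfl) hbound l (Icc 1 k)).mono
    ((measurable_freedmanProcess hX c l k).mono (𝒢.le k) le_rfl).aestronglyMeasurable ?_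
  filter_upwards [predictableQuadVar_nonneg k] with ω hω
  simp only [freedmanProcess, norm_of_nonneg (exp_pos _).le, exp_le_exp]
  nlinarith [mul_nonneg hc (hω : 0 ≤ predictableQuadVar μ 𝒢 X k ω)]

theorem supermartingale_freedmanProcess [IsFiniteMeasure μ] (hX : ∀ i, Measurable[𝒢 i] (X i))
    (hmean : ∀ i, μ[X i | 𝒢 (i - 1)] =ᵐ[μ] 0) (hbound : ∀ i, ∀ᵐ ω ∂μ, |X i ω| ≤ M)
    {l : ℝ} (hl : 0 ≤ l) (hlM : l * M < 3) :
    Supermartingale (freedmanProcess μ 𝒢 X (freedmanCoeff M l) l) 𝒢 μ := by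
  set c := freedmanCoeff M l
  have hc : 0 ≤ c := freedmanCoeff_nonneg hlM
  refine supermartingale_nat (fun k => (measurable_freedmanProcess hX c l k).stronglyMeasurable)
    (integrable_freedmanProcess hX hbound hc l) fun k => ?_
  set W : Ω → ℝ := fun ω =>
    exp (l * ∑ i ∈ Icc 1 k, X i ω - c * predictableQuadVar μ 𝒢 X (k + 1) ω)
  have hW : StronglyMeasurable[𝒢 k] W :=
    (measurable_exp.comp (((measurable_sum_Icc hX le_rfl).const_mul l).sub
      ((measurable_predictableQuadVar le_rfl).const_mul c))).stronglyMeasurable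
  have hsplit : freedmanProcess μ 𝒢 X c l (k + 1) = W * fun ω => exp (l * X (k + 1) ω) := by
    ext ω
    simp only [freedmanProcess, W, Pi.mul_apply, ← exp_add,
      sum_Icc_succ_top (Nat.le_add_left 1 k)]
    ring_nf
  have hXk : AEStronglyMeasurable (X (k + 1)) μ :=
    ((hX (k + 1)).mono (𝒢.le _) le_rfl).aestronglyMeasurable
  filter_upwards [condExp_mul_of_stronglyMeasurable_left hW
      (hsplit ▸ integrable_freedmanProcess hX hbound hc l (k + 1))
      (integrable_exp_mul_of_abs_le hXk (hbound (k + 1)) l),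
    condExp_exp_mul_le (𝒢.le k) hXk (hmean (k + 1)) (hbound (k + 1)) hl hlM] with ω h₁ h₂
  rw [hsplit, h₁]
  calc W ω * μ[fun ω => exp (l * X (k + 1) ω) | 𝒢 k] ω
      ≤ W ω * exp (c * μ[fun ω' => X (k + 1) ω' ^ 2 | 𝒢 k] ω) :=
        mul_le_mul_of_nonneg_left h₂ (exp_pos _).le
    _ = freedmanProcess μ 𝒢 X c l k ω := by
      simp only [W, freedmanProcess, predictableQuadVar, ← exp_add,
        sum_Icc_succ_top (Nat.le_add_left 1 k), Nat.add_sub_cancel]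
      ring_nf

theorem integral_exp_mul_sum_le [IsProbabilityMeasure μ] (hX : ∀ i, Measurable[𝒢 i] (X i))
    (hmean : ∀ i, μ[X i | 𝒢 (i - 1)] =ᵐ[μ] 0) (hbound : ∀ i, ∀ᵐ ω ∂μ, |X i ω| ≤ M)
    {l v : ℝ} (hl : 0 ≤ l) (hlM : l * M < 3) {n : ℕ}
    (hvar : ∀ᵐ ω ∂μ, predictableQuadVar μ 𝒢 X n ω ≤ v) :
    ∫ ω, exp (l * ∑ i ∈ Icc 1 n, X i ω) ∂μ ≤ exp (freedmanCoeff M l * v) := by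
  set c := freedmanCoeff M l
  have hc : 0 ≤ c := freedmanCoeff_nonneg hlM
  have hZ : ∫ ω, freedmanProcess μ 𝒢 X c l n ω ∂μ ≤ 1 := by
    simpa [freedmanProcess, predictableQuadVar] using
      (supermartingale_freedmanProcess hX hmean hbound hl hlM).setIntegral_le (Nat.zero_le n)
        MeasurableSet.univ
  have hle : (fun ω => exp (l * ∑ i ∈ Icc 1 n, X i ω))
      ≤ᵐ[μ] fun ω => exp (c * v) * freedmanProcess μ 𝒢 X c l n ω := by
    filter_upwards [hvar] with ω hω
    rw [freedmanProcess, ← exp_add, exp_le_exp]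
    nlinarith [mul_le_mul_of_nonneg_left hω hc]
  calc ∫ ω, exp (l * ∑ i ∈ Icc 1 n, X i ω) ∂μ
      ≤ ∫ ω, exp (c * v) * freedmanProcess μ 𝒢 X c l n ω ∂μ :=
        integral_mono_ae
          (integrable_exp_mul_sum (fun i => (hX i).mono (𝒢.le i) le_rfl) hbound l _)
          ((integrable_freedmanProcess hX hbound hc l n).const_mul _) hle
    _ = exp (c * v) * ∫ ω, freedmanProcess μ 𝒢 X c l n ω ∂μ := integral_const_mul _ _
    _ ≤ exp (c * v) := mul_le_of_le_one_right (exp_pos _).le hZ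

theorem measureReal_sum_ge_le [IsProbabilityMeasure μ] (hX : ∀ i, Measurable[𝒢 i] (X i))
    (hmean : ∀ i, μ[X i | 𝒢 (i - 1)] =ᵐ[μ] 0) (hbound : ∀ i, ∀ᵐ ω ∂μ, |X i ω| ≤ M)
    {l v : ℝ} (hl : 0 < l) (hlM : l * M < 3) {n : ℕ}
    (hvar : ∀ᵐ ω ∂μ, predictableQuadVar μ 𝒢 X n ω ≤ v) (t : ℝ) :
    μ.real {ω | t ≤ ∑ i ∈ Icc 1 n, X i ω} ≤ exp (freedmanCoeff M l * v - l * t) := by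
  have hmarkov := mul_meas_ge_le_integral_of_nonneg (ae_of_all μ fun ω => (exp_pos _).le)
    (integrable_exp_mul_sum (fun i => (hX i).mono (𝒢.le i) le_rfl) hbound l (Icc 1 n))
    (exp (l * t))
  simp only [exp_le_exp, mul_le_mul_iff_right₀ hl] at hmarkov
  rw [exp_sub, le_div_iff₀ (exp_pos _), mul_comm]
  exact hmarkov.trans (integral_exp_mul_sum_le hX hmean hbound hl.le hlM hvar)

end Freedman

/-- Freedman's inequality. -/
theorem stmt_9 {Ω : Type*} {m0 : MeasurableSpace Ω} (μ : Measure Ω) [IsProbabilityMeasure μ]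
    (n : ℕ) (𝒢 : Filtration ℕ m0) (X : ℕ → Ω → ℝ)
    (δ M v : ℝ) (hδ : δ ∈ Set.Ioo (0:ℝ) 1) (hM : 0 < M) (hv : 0 < v)
    (hadapted : ∀ i, Measurable[𝒢 i] (X i))
    (hmean : ∀ i, (μ[X i | 𝒢 (i - 1)]) =ᵐ[μ] 0)
    (hbound : ∀ i, ∀ᵐ ω ∂μ, |X i ω| ≤ M)
    (hvar : ∀ᵐ ω ∂μ,
      ∑ i ∈ Finset.Icc 1 n, (μ[fun ω' => (X i ω') ^ 2 | 𝒢 (i - 1)]) ω ≤ v) :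
    1 - δ ≤ (μ {ω | ∑ i ∈ Finset.Icc 1 n, X i ω ≤
        Real.sqrt (2 * v * Real.log (1 / δ)) + (2 / 3) * M * Real.log (1 / δ)}).toReal := by
  obtain ⟨hδ0, hδ1⟩ := hδ
  set L := log (1 / δ)
  have hL : 0 < L := log_pos (by rw [one_div]; exact (one_lt_inv₀ hδ0).2 hδ1)
  set t := √(2 * v * L) + 2 / 3 * M * L
  have ht : 0 < t := by positivity
  set l := 2 * L / t
  have hlM : l * M < 3 := by
    rw [div_mul_eq_mul_div, div_lt_iff₀ ht]
    linarith [show t = √(2 * v * L) + 2 / 3 * M * L from rfl,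
      sqrt_pos.2 (by positivity : 0 < 2 * v * L)]
  have htail : μ.real {ω | t ≤ ∑ i ∈ Icc 1 n, X i ω} ≤ δ :=
    calc _ ≤ exp (freedmanCoeff M l * v - l * t) :=
          measureReal_sum_ge_le hadapted hmean hbound (by positivity) hlM hvar t
      _ ≤ exp (-L) := by
          rw [exp_le_exp, div_mul_cancel₀ _ ht.ne']
          linarith [freedmanCoeff_mul_le hL hv hM.le]
      _ = δ := by simp only [L, one_div, log_inv, neg_neg, exp_log hδ0]
  have hcompl : {ω | ∑ i ∈ Icc 1 n, X i ω ≤ t} = {ω | t < ∑ i ∈ Icc 1 n, X i ω}ᶜ := by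
    ext ω; simp
  rw [← measureReal_def, hcompl, probReal_compl_eq_one_sub (measurableSet_lt measurable_const
    ((measurable_sum_Icc hadapted le_rfl).mono (𝒢.le n) le_rfl))]
  have hlt : μ.real {ω | t < ∑ i ∈ Icc 1 n, X i ω} ≤ μ.real {ω | t ≤ ∑ i ∈ Icc 1 n, X i ω} :=
    measureReal_mono fun ω (h : t < _) => h.le
  linarith
end

section
/- Let ε ≥ 0 and let Q be a Markov kernel from a measurable space X to a measurable space Y that is ε-differentially private, i.e., Q(x)(S) ≤ e^{ε}·Q(x′)(S) for all x, x′ ∈ X and all measurable S ⊆ Y. Then for any pair of probability measures P₁ and P₂ on X, the induced marginal measures M₁ and M₂ on Y, defined by M_j(S) = ∫_X Q(x)(S) dP_j(x) for j = 1, 2, satisfy KL(M₁ ‖ M₂) + KL(M₂ ‖ M₁) ≤ min{4, e^{2ε}}·(e^{ε} − 1)²·TV(P₁, P₂)², where KL denotes the Kullback–Leibler divergence and TV the total variation distance. -/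
/-!
Differential privacy makes each function `x ↦ Q x S` vary by at most the factor `e^ε` around
its infimum `b`, so only its excess over `b`, which is at most `(e^ε - 1) b`, feels the change
from `P₂` to `P₁`; by the layer-cake formula that change is at most `(e^ε - 1) b · TV`. Hence
`M₁ ≤ (1 + c) M₂` and `M₂ ≤ (1 + c) M₁` with `c = (e^ε - 1) TV`, so the density `f = dM₁/dM₂`
takes values in `[(1 + c)⁻¹, 1 + c]`. The symmetrised divergence is `∫ (f - 1) log f dM₂`, and
both `|f - 1|` and `|log f|` are at most `c`, which gives the bound `c² ≤ min 4 e^{2ε} · c²`.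
-/

open MeasureTheory

open Classical in
/-- Kullback–Leibler divergence, `+∞` unless `μ ≪ ν` and the log-likelihood ratio
is `μ`-integrable. -/
noncomputable def klDiv {Y : Type*} [MeasurableSpace Y] (μ ν : Measure Y) : EReal :=
  if μ ≪ ν ∧ Integrable (llr μ ν) μ then ((∫ y, llr μ ν y ∂μ : ℝ) : EReal) else ⊤

/-- Total variation distance between two measures. -/
noncomputable def tvDist {X : Type*} [MeasurableSpace X] (P₁ P₂ : Measure X) : ℝ :=
  ⨆ S : {S : Set X // MeasurableSet S}, |(P₁ S.1).toReal - (P₂ S.1).toReal|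

open Set Real ProbabilityTheory
open scoped ENNReal

section RealBounds

variable {c f : ℝ}

lemma abs_log_le_sub_one_of_mem_Icc (hc : 0 < c) (hf : f ∈ Icc c⁻¹ c) : |log f| ≤ c - 1 := by
  have hf0 : 0 < f := (inv_pos.mpr hc).trans_le hf.1
  have hlogc : log c ≤ c - 1 := log_le_sub_one_of_pos hc
  rw [abs_le]
  constructor
  · have : log f⁻¹ ≤ log c := log_le_log (inv_pos.mpr hf0) ((inv_le_comm₀ hc hf0).mp hf.1)
    rw [log_inv] at this
    linarith
  · linarith [log_le_log hf0 hf.2]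

lemma abs_sub_one_le_sub_one_of_mem_Icc (hc : 0 < c) (hf : f ∈ Icc c⁻¹ c) : |f - 1| ≤ c - 1 := by
  have : 2 ≤ c + c⁻¹ := by
    nlinarith [mul_inv_cancel₀ hc.ne', mul_nonneg (sq_nonneg (c - 1)) (inv_pos.mpr hc).le]
  rw [abs_le]
  constructor <;> linarith [hf.1, hf.2]

lemma abs_sub_one_mul_log_le_sq_of_mem_Icc (hc : 0 < c) (hf : f ∈ Icc c⁻¹ c) :
    |(f - 1) * log f| ≤ (c - 1) ^ 2 := by
  rw [abs_mul, sq]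
  exact mul_le_mul (abs_sub_one_le_sub_one_of_mem_Icc hc hf)
    (abs_log_le_sub_one_of_mem_Icc hc hf) (abs_nonneg _) ((abs_nonneg _).trans
      (abs_log_le_sub_one_of_mem_Icc hc hf))

end RealBounds

namespace MeasureTheory.Measure

variable {Y : Type*} [MeasurableSpace Y] {μ ν : Measure Y}

lemma rnDeriv_le_of_le_smul [SigmaFinite ν] {c : ℝ≥0∞} (h : μ ≤ c • ν) :
    ∀ᵐ y ∂ν, μ.rnDeriv ν y ≤ c := by
  refine ae_le_of_forall_setLIntegral_le_of_sigmaFinite (μ.measurable_rnDeriv ν) fun s _ _ ↦ ?_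
  rw [setLIntegral_const]
  exact (setLIntegral_rnDeriv_le s).trans (h s)

lemma inv_le_rnDeriv_of_le_smul [SigmaFinite μ] [SigmaFinite ν] {c : ℝ≥0∞} (h : ν ≤ c • μ) :
    ∀ᵐ y ∂ν, c⁻¹ ≤ μ.rnDeriv ν y := by
  have hνμ : ν ≪ μ := absolutelyContinuous_of_le_smul h
  filter_upwards [inv_rnDeriv hνμ, hνμ.ae_le (rnDeriv_le_of_le_smul h)] with y hinv hle
  rw [← hinv]
  exact ENNReal.inv_le_inv.mpr hle

lemma toReal_rnDeriv_mem_Icc_of_le_smul [SigmaFinite μ] [SigmaFinite ν] {c : ℝ} (hc : 0 < c)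
    (hμν : μ ≤ ENNReal.ofReal c • ν) (hνμ : ν ≤ ENNReal.ofReal c • μ) :
    ∀ᵐ y ∂ν, (μ.rnDeriv ν y).toReal ∈ Icc c⁻¹ c := by
  filter_upwards [rnDeriv_le_of_le_smul hμν, inv_le_rnDeriv_of_le_smul hνμ] with y hle hge
  have hne : μ.rnDeriv ν y ≠ ∞ := ne_top_of_le_ne_top ENNReal.ofReal_ne_top hle
  constructor
  · rw [← ENNReal.ofReal_inv_of_pos hc] at hge
    simpa [inv_nonneg.mpr hc.le] using ENNReal.toReal_mono hne hge
  · simpa [hc.le] using ENNReal.toReal_mono ENNReal.ofReal_ne_top hle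

end MeasureTheory.Measure

section KullbackLeibler

variable {Y : Type*} [MeasurableSpace Y] {μ ν : Measure Y}

lemma klDiv_add_klDiv_eq_integral [IsFiniteMeasure μ] [IsFiniteMeasure ν] (hμν : μ ≪ ν)
    (hνμ : ν ≪ μ) {C : ℝ} (hC : ∀ᵐ y ∂ν, |llr μ ν y| ≤ C) :
    klDiv μ ν + klDiv ν μ = ((∫ y, ((μ.rnDeriv ν y).toReal - 1) * llr μ ν y ∂ν : ℝ) : EReal) := by
  have hν : Integrable (llr μ ν) ν :=
    .of_bound (measurable_llr μ ν).aestronglyMeasurable C hC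
  have hμ : Integrable (llr μ ν) μ :=
    .of_bound (measurable_llr μ ν).aestronglyMeasurable C (hμν.ae_le hC)
  have hswap : llr ν μ =ᵐ[ν] fun y ↦ -llr μ ν y := by
    filter_upwards [neg_llr hνμ] with y hy
    simp [← hy]
  have hν' : Integrable (llr ν μ) ν := hν.neg.congr hswap.symm
  rw [klDiv, if_pos ⟨hμν, hμ⟩, klDiv, if_pos ⟨hνμ, hν'⟩, ← EReal.coe_add,
    ← integral_rnDeriv_smul hμν, integral_congr_ae hswap, integral_neg, ← sub_eq_add_neg,
    ← integral_sub ((integrable_rnDeriv_smul_iff hμν).mpr hμ) hν]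
  simp only [smul_eq_mul, sub_mul, one_mul]

lemma klDiv_add_klDiv_le_of_le_smul [IsProbabilityMeasure μ] [IsProbabilityMeasure ν] {c : ℝ}
    (hc : 0 < c) (hμν : μ ≤ ENNReal.ofReal c • ν) (hνμ : ν ≤ ENNReal.ofReal c • μ) :
    klDiv μ ν + klDiv ν μ ≤ (((c - 1) ^ 2 : ℝ) : EReal) := by
  have hf := Measure.toReal_rnDeriv_mem_Icc_of_le_smul hc hμν hνμ
  rw [klDiv_add_klDiv_eq_integral (Measure.absolutelyContinuous_of_le_smul hμν)
    (Measure.absolutelyContinuous_of_le_smul hνμ)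
    (hf.mono fun _ ↦ abs_log_le_sub_one_of_mem_Icc hc), EReal.coe_le_coe_iff]
  have := norm_integral_le_of_norm_le_const (μ := ν)
    (f := fun y ↦ ((μ.rnDeriv ν y).toReal - 1) * llr μ ν y)
    (hf.mono fun _ ↦ abs_sub_one_mul_log_le_sq_of_mem_Icc hc)
  rw [probReal_univ, mul_one] at this
  exact (le_abs_self _).trans this

end KullbackLeibler

lemma tvDist_comm {X : Type*} [MeasurableSpace X] (P₁ P₂ : Measure X) :
    tvDist P₁ P₂ = tvDist P₂ P₁ := by
  simp only [tvDist, abs_sub_comm]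

section TotalVariation

variable {X : Type*} [MeasurableSpace X] {P₁ P₂ : Measure X} [IsFiniteMeasure P₁]
  [IsFiniteMeasure P₂]

lemma bddAbove_range_abs_sub_toReal :
    BddAbove (range fun S : {S : Set X // MeasurableSet S} ↦
      |(P₁ S.1).toReal - (P₂ S.1).toReal|) := by
  refine ⟨P₁.real univ + P₂.real univ, ?_⟩
  rintro _ ⟨S, rfl⟩
  have h₁ : (P₁ S.1).toReal ≤ P₁.real univ := measureReal_mono (subset_univ _)
  have h₂ : (P₂ S.1).toReal ≤ P₂.real univ := measureReal_mono (subset_univ _)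
  exact (abs_sub _ _).trans (by simpa using add_le_add h₁ h₂)

lemma abs_sub_le_tvDist {A : Set X} (hA : MeasurableSet A) :
    |(P₁ A).toReal - (P₂ A).toReal| ≤ tvDist P₁ P₂ :=
  le_ciSup bddAbove_range_abs_sub_toReal ⟨A, hA⟩

lemma tvDist_nonneg : 0 ≤ tvDist P₁ P₂ :=
  (abs_nonneg _).trans (abs_sub_le_tvDist MeasurableSet.empty)

lemma measure_le_add_tvDist {A : Set X} (hA : MeasurableSet A) :
    P₁ A ≤ P₂ A + ENNReal.ofReal (tvDist P₁ P₂) := by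
  rw [← ENNReal.ofReal_toReal (measure_ne_top P₁ A), ← ENNReal.ofReal_toReal (measure_ne_top P₂ A),
    ← ENNReal.ofReal_add ENNReal.toReal_nonneg tvDist_nonneg]
  refine ENNReal.ofReal_le_ofReal ?_
  linarith [le_abs_self ((P₁ A).toReal - (P₂ A).toReal),
    abs_sub_le_tvDist (P₁ := P₁) (P₂ := P₂) hA]

end TotalVariation

lemma lintegral_le_lintegral_add_mul_of_le_add {X : Type*} [MeasurableSpace X] {P P' : Measure X}
    {t d : ℝ≥0∞} (hd : d ≠ ∞) (hPP' : ∀ A, MeasurableSet A → P A ≤ P' A + t) {h : X → ℝ≥0∞}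
    (hm : Measurable h) (hb : ∀ x, h x ≤ d) :
    ∫⁻ x, h x ∂P ≤ (∫⁻ x, h x ∂P') + d * t := by
  set hr : X → ℝ := fun x ↦ (h x).toReal
  have hrm : Measurable hr := hm.ennreal_toReal
  have hrd : ∀ x, hr x ≤ d.toReal := fun x ↦ ENNReal.toReal_mono hd (hb x)
  have layercake : ∀ R : Measure X, ∫⁻ x, h x ∂ R = ∫⁻ s in Ioi 0, R {x | s < hr x} := by
    intro R
    rw [← lintegral_eq_lintegral_meas_lt R (.of_forall fun _ ↦ ENNReal.toReal_nonneg)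
      hrm.aemeasurable]
    exact lintegral_congr fun x ↦ (ENNReal.ofReal_toReal (ne_top_of_le_ne_top hd (hb x))).symm
  have hlevel_empty : ∀ s ∈ Ioi d.toReal, {x | s < hr x} = ∅ := fun s hs ↦
    eq_empty_of_forall_notMem fun x hx ↦ (hrd x).not_gt (hs.trans hx)
  have htail : ∫⁻ s in Ioi d.toReal, P {x | s < hr x} = 0 := by
    rw [setLIntegral_congr_fun measurableSet_Ioi fun s hs ↦ by rw [hlevel_empty s hs]]
    simp
  calc ∫⁻ x, h x ∂P = ∫⁻ s in Ioc 0 d.toReal, P {x | s < hr x} := by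
        rw [layercake, ← Ioc_union_Ioi_eq_Ioi ENNReal.toReal_nonneg,
          lintegral_union measurableSet_Ioi (Ioc_disjoint_Ioi le_rfl), htail, add_zero]
    _ ≤ ∫⁻ s in Ioc 0 d.toReal, (P' {x | s < hr x} + t) :=
        lintegral_mono fun s ↦ hPP' _ (measurableSet_lt measurable_const hrm)
    _ = (∫⁻ s in Ioc 0 d.toReal, P' {x | s < hr x}) + d * t := by
        rw [lintegral_add_right _ measurable_const, setLIntegral_const, Real.volume_Ioc, sub_zero,
          ENNReal.ofReal_toReal hd, mul_comm]
    _ ≤ (∫⁻ x, h x ∂P') + d * t := by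
        rw [layercake]
        gcongr ?_ + _
        exact lintegral_mono_set Ioc_subset_Ioi_self

lemma lintegral_le_mul_lintegral_of_le_mul {X : Type*} [MeasurableSpace X] {P P' : Measure X}
    [IsProbabilityMeasure P] [IsProbabilityMeasure P'] {t e : ℝ≥0∞} (he : e ≠ ∞)
    (hPP' : ∀ A, MeasurableSet A → P A ≤ P' A + t) {g : X → ℝ≥0∞} (hg : Measurable g)
    (hg_top : ∀ x, g x ≠ ∞) (hge : ∀ x x', g x ≤ e * g x') :
    ∫⁻ x, g x ∂P ≤ (1 + (e - 1) * t) * ∫⁻ x, g x ∂P' := by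
  have := nonempty_of_isProbabilityMeasure P
  set b := ⨅ x, g x
  have hb_le : ∀ x, b ≤ g x := iInf_le g
  have hb_top : b ≠ ∞ := ne_top_of_le_ne_top (hg_top (Classical.arbitrary X)) (hb_le _)
  have hg_le : ∀ x, g x ≤ e * b := fun x ↦ by
    rw [ENNReal.mul_iInf fun h ↦ absurd h he]
    exact le_iInf (hge x)
  have hexcess_le : ∀ x, g x - b ≤ (e - 1) * b := fun x ↦ by
    rw [ENNReal.sub_mul fun _ _ ↦ hb_top, one_mul]
    exact tsub_le_tsub_right (hg_le x) b
  have hsplit : ∀ (R : Measure X) [IsProbabilityMeasure R],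
      ∫⁻ x, g x ∂ R = b + ∫⁻ x, g x - b ∂ R := fun R _ ↦ by
    calc ∫⁻ x, g x ∂ R = ∫⁻ x, b + (g x - b) ∂ R :=
          lintegral_congr fun x ↦ (add_tsub_cancel_of_le (hb_le x)).symm
      _ = b + ∫⁻ x, g x - b ∂ R := by
          rw [lintegral_add_left measurable_const, lintegral_const, measure_univ, mul_one]
  have hb_le_lintegral : b ≤ ∫⁻ x, g x ∂P' := hsplit P' ▸ le_self_add
  calc ∫⁻ x, g x ∂P = b + ∫⁻ x, g x - b ∂P := hsplit P
    _ ≤ b + ((∫⁻ x, g x - b ∂P') + (e - 1) * b * t) := by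
        gcongr
        exact lintegral_le_lintegral_add_mul_of_le_add
          (ENNReal.mul_ne_top (ENNReal.sub_ne_top he) hb_top) hPP' (hg.sub measurable_const)
          hexcess_le
    _ = ∫⁻ x, g x ∂P' + (e - 1) * b * t := by rw [hsplit P']; ring
    _ ≤ ∫⁻ x, g x ∂P' + (e - 1) * (∫⁻ x, g x ∂P') * t := by gcongr
    _ = (1 + (e - 1) * t) * ∫⁻ x, g x ∂P' := by ring

section Kernel

variable {X Y : Type*} [MeasurableSpace X] [MeasurableSpace Y] {Q : Kernel X Y}
  {P P' : Measure X} [IsProbabilityMeasure P] [IsProbabilityMeasure P']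

lemma bind_le_smul_bind_of_le_add [IsFiniteKernel Q] {e t : ℝ≥0∞} (he : e ≠ ∞)
    (hQ : ∀ x x' S, MeasurableSet S → Q x S ≤ e * Q x' S)
    (hPP' : ∀ A, MeasurableSet A → P A ≤ P' A + t) :
    P.bind Q ≤ (1 + (e - 1) * t) • P'.bind Q := by
  refine Measure.le_iff.mpr fun S hS ↦ ?_
  rw [Measure.smul_apply, smul_eq_mul, Measure.bind_apply hS Q.aemeasurable,
    Measure.bind_apply hS Q.aemeasurable]
  exact lintegral_le_mul_lintegral_of_le_mul he hPP' (Q.measurable_coe hS)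
    (fun x ↦ measure_ne_top (Q x) S) fun x x' ↦ hQ x x' S hS

lemma bind_le_ofReal_smul_bind [IsFiniteKernel Q] {ε : ℝ} (hε : 0 ≤ ε)
    (hQ : ∀ x x' S, MeasurableSet S → Q x S ≤ ENNReal.ofReal (exp ε) * Q x' S) :
    P.bind Q ≤ ENNReal.ofReal (1 + (exp ε - 1) * tvDist P P') • P'.bind Q := by
  have hexp : 0 ≤ exp ε - 1 := sub_nonneg.mpr (one_le_exp hε)
  have hPP' : ∀ A, MeasurableSet A → P A ≤ P' A + ENNReal.ofReal (tvDist P P') :=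
    fun _ ↦ measure_le_add_tvDist
  refine (bind_le_smul_bind_of_le_add ENNReal.ofReal_ne_top hQ hPP').trans_eq ?_
  rw [ENNReal.ofReal_add zero_le_one (mul_nonneg hexp tvDist_nonneg), ENNReal.ofReal_one,
    ENNReal.ofReal_mul hexp, ENNReal.ofReal_sub _ zero_le_one, ENNReal.ofReal_one]

end Kernel

theorem stmt_10 {X Y : Type*} [MeasurableSpace X] [MeasurableSpace Y]
    (ε : ℝ) (hε : 0 ≤ ε)
    (Q : ProbabilityTheory.Kernel X Y) [ProbabilityTheory.IsMarkovKernel Q]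
    (hDP : ∀ x x' : X, ∀ S : Set Y, MeasurableSet S →
      Q x S ≤ ENNReal.ofReal (Real.exp ε) * Q x' S)
    (P₁ P₂ : Measure X) [IsProbabilityMeasure P₁] [IsProbabilityMeasure P₂] :
    klDiv (P₁.bind Q) (P₂.bind Q) + klDiv (P₂.bind Q) (P₁.bind Q) ≤
      ((min 4 (Real.exp (2 * ε)) * (Real.exp ε - 1) ^ 2 * tvDist P₁ P₂ ^ 2 : ℝ) : EReal) := by
  have : IsProbabilityMeasure (P₁.bind Q) := isProbabilityMeasure_bind Q.aemeasurable
    (.of_forall fun _ ↦ inferInstance)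
  have : IsProbabilityMeasure (P₂.bind Q) := isProbabilityMeasure_bind Q.aemeasurable
    (.of_forall fun _ ↦ inferInstance)
  have hexp : 0 ≤ exp ε - 1 := sub_nonneg.mpr (one_le_exp hε)
  have h₁₂ := bind_le_ofReal_smul_bind (P := P₁) (P' := P₂) hε hDP
  have h₂₁ := bind_le_ofReal_smul_bind (P := P₂) (P' := P₁) hε hDP
  rw [tvDist_comm] at h₂₁
  have hc : 0 < 1 + (exp ε - 1) * tvDist P₁ P₂ :=
    add_pos_of_pos_of_nonneg one_pos (mul_nonneg hexp tvDist_nonneg)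
  refine (klDiv_add_klDiv_le_of_le_smul hc h₁₂ h₂₁).trans (EReal.coe_le_coe_iff.mpr ?_)
  have hmin : 1 ≤ min 4 (exp (2 * ε)) := le_min (by norm_num) (one_le_exp (by positivity))
  calc (1 + (exp ε - 1) * tvDist P₁ P₂ - 1) ^ 2 = 1 * (exp ε - 1) ^ 2 * tvDist P₁ P₂ ^ 2 := by ring
    _ ≤ min 4 (exp (2 * ε)) * (exp ε - 1) ^ 2 * tvDist P₁ P₂ ^ 2 := by gcongr
end

section
/- Fix a finite state set S with a probability distribution d0 on S, a finite action set A, a reference policy π_ref with π_ref(a|s) > 0 for all s, a, β > 0, and a true reward r : S × A → ℝ. Let g : S × A → ℝ satisfy the pessimism condition g(s,a) ≤ r(s,a) for all (s,a). Let π_r and π_g be the Gibbs policies of r and g respectively, and let J denote the KL-regularized objective with reward r. Then J(π_r) − J(π_g) ≤ β · Σ_s d0(s) · Σ_a π_r(a|s) · (g(s,a) − r(s,a))². -/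
/-- The Gibbs policy associated with reward `g`, reference policy `πref` and
inverse temperature `β`. -/
noncomputable def gibbs {S A : Type*} [Fintype A]
    (πref : S → A → ℝ) (β : ℝ) (g : S → A → ℝ) (s : S) (a : A) : ℝ :=
  πref s a * Real.exp (β * g s a) / ∑ a', πref s a' * Real.exp (β * g s a')

/-- The KL-regularized objective `J(π)` for true reward `r`. -/
noncomputable def J {S A : Type*} [Fintype S] [Fintype A] (d0 : S → ℝ)
    (πref : S → A → ℝ) (β : ℝ) (r : S → A → ℝ) (π : S → A → ℝ) : ℝ :=
  ∑ s, d0 s * ∑ a, π s a * (r s a - β⁻¹ * Real.log (π s a / πref s a))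

/-!
Per state, the Gibbs variational principle gives `J(π_r) - J(π) = β⁻¹ KL(π ‖ π_r)`, and `π_g` is
the exponential tilt of `π_r` by `x = β (g - r) ≤ 0`. For such a tilt,
`KL(π_g ‖ π_r) = E[x eˣ] / E[eˣ] - log E[eˣ]` with expectations under `π_r`. Jensen gives
`log E[eˣ] ≥ E[x]`, and for nonpositive `x` the covariance of `x` and `eˣ` is at most
`E[x²] E[eˣ]`, because `(u - v)(eᵘ - eᵛ) ≤ eᵘ v² + eᵛ u²` for `u, v ≤ 0`. Hence
`KL(π_g ‖ π_r) ≤ E[x²] = β² E[(g - r)²]`.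
-/

open Finset

section WeightedSums

open Real

lemma sub_mul_exp_sub_exp_le {u v : ℝ} (hu : u ≤ 0) (hv : v ≤ 0) :
    (u - v) * (exp u - exp v) ≤ exp u * v ^ 2 + exp v * u ^ 2 := by
  wlog hvu : v ≤ u generalizing u v
  · linarith [this hv hu (le_of_not_ge hvu)]
  have tangent : exp u - exp v ≤ exp u * (u - v) := by
    have h := mul_le_mul_of_nonneg_left (add_one_le_exp (v - u)) (exp_pos u).le
    rw [← exp_add, add_sub_cancel] at h
    linarith
  calc (u - v) * (exp u - exp v) ≤ (u - v) * (exp u * (u - v)) :=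
        mul_le_mul_of_nonneg_left tangent (sub_nonneg.2 hvu)
    _ = exp u * (u - v) ^ 2 := by ring
    _ ≤ exp u * v ^ 2 := mul_le_mul_of_nonneg_left (by nlinarith) (exp_pos u).le
    _ ≤ exp u * v ^ 2 + exp v * u ^ 2 := le_add_of_nonneg_right (by positivity)

variable {ι : Type*} (s : Finset ι)

lemma sum_sum_mul_mul_sub_mul_sub (p f g : ι → ℝ) :
    ∑ i ∈ s, ∑ j ∈ s, p i * p j * ((f i - f j) * (g i - g j)) =
      2 * ((∑ i ∈ s, p i) * ∑ i ∈ s, p i * (f i * g i)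
        - (∑ i ∈ s, p i * f i) * ∑ i ∈ s, p i * g i) := by
  have h : ∀ i j, p i * p j * ((f i - f j) * (g i - g j)) = p j * (p i * (f i * g i))
      + p i * (p j * (f j * g j)) - p i * f i * (p j * g j) - p i * g i * (p j * f j) := by
    intros; ring
  simp only [h, sum_add_distrib, sum_sub_distrib, ← mul_sum, ← sum_mul]
  ring

lemma sum_sum_mul_mul_add_mul (p f g : ι → ℝ) :
    ∑ i ∈ s, ∑ j ∈ s, p i * p j * (f i * g j + f j * g i) =
      2 * ((∑ i ∈ s, p i * f i) * ∑ i ∈ s, p i * g i) := by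
  have h : ∀ i j, p i * p j * (f i * g j + f j * g i) =
      p i * f i * (p j * g j) + p i * g i * (p j * f j) := by
    intros; ring
  simp only [h, sum_add_distrib, ← mul_sum, ← sum_mul]
  ring

/-- Written as a double sum over pairs of indices, the covariance on the left is bounded termwise
by `sub_mul_exp_sub_exp_le`. -/
lemma cov_exp_le_of_nonpos {p : ι → ℝ} (hp : ∀ i ∈ s, 0 ≤ p i) {x : ι → ℝ} (hx : ∀ i ∈ s, x i ≤ 0) :
    (∑ i ∈ s, p i) * ∑ i ∈ s, p i * (x i * exp (x i))
        - (∑ i ∈ s, p i * x i) * ∑ i ∈ s, p i * exp (x i)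
      ≤ (∑ i ∈ s, p i * x i ^ 2) * ∑ i ∈ s, p i * exp (x i) := by
  have pairwise := sum_le_sum fun i hi => sum_le_sum fun j hj =>
    mul_le_mul_of_nonneg_left (sub_mul_exp_sub_exp_le (hx i hi) (hx j hj))
      (mul_nonneg (hp i hi) (hp j hj))
  rw [sum_sum_mul_mul_sub_mul_sub, sum_sum_mul_mul_add_mul] at pairwise
  linarith

lemma sum_mul_exp_div_sub_log_le {p : ι → ℝ} (hp : ∀ i ∈ s, 0 ≤ p i) (hp1 : ∑ i ∈ s, p i = 1)
    {x : ι → ℝ} (hx : ∀ i ∈ s, x i ≤ 0) :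
    (∑ i ∈ s, p i * (x i * exp (x i))) / (∑ i ∈ s, p i * exp (x i))
        - log (∑ i ∈ s, p i * exp (x i))
      ≤ ∑ i ∈ s, p i * x i ^ 2 := by
  set F := ∑ i ∈ s, p i * exp (x i)
  have jensen : exp (∑ i ∈ s, p i * x i) ≤ F := by
    simpa using convexOn_exp.map_sum_le hp hp1 (by simp)
  have hF : 0 < F := (exp_pos _).trans_le jensen
  have hlog : ∑ i ∈ s, p i * x i ≤ log F := (le_log_iff_exp_le hF).2 jensen
  have cov := cov_exp_le_of_nonpos s hp hx
  rw [hp1, one_mul] at cov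
  have : (∑ i ∈ s, p i * (x i * exp (x i))) / F ≤ ∑ i ∈ s, p i * x i + ∑ i ∈ s, p i * x i ^ 2 := by
    rw [div_le_iff₀ hF]; linarith
  linarith

end WeightedSums

noncomputable def partition {S A : Type*} [Fintype A] (πref : S → A → ℝ) (β : ℝ)
    (g : S → A → ℝ) (s : S) : ℝ :=
  ∑ a, πref s a * Real.exp (β * g s a)

noncomputable def stateValue {S A : Type*} [Fintype A] (πref : S → A → ℝ) (β : ℝ)
    (r π : S → A → ℝ) (s : S) : ℝ :=
  ∑ a, π s a * (r s a - β⁻¹ * Real.log (π s a / πref s a))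

noncomputable def relEntropy {A : Type*} [Fintype A] (q p : A → ℝ) : ℝ :=
  ∑ a, q a * Real.log (q a / p a)

lemma gibbs_eq_div_partition {S A : Type*} [Fintype A] (πref : S → A → ℝ) (β : ℝ)
    (g : S → A → ℝ) (s : S) (a : A) :
    gibbs πref β g s a = πref s a * Real.exp (β * g s a) / partition πref β g s :=
  rfl

lemma J_eq_sum_stateValue {S A : Type*} [Fintype S] [Fintype A] (d0 : S → ℝ)
    (πref : S → A → ℝ) (β : ℝ) (r π : S → A → ℝ) :
    J d0 πref β r π = ∑ s, d0 s * stateValue πref β r π s :=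
  rfl

lemma relEntropy_self {A : Type*} [Fintype A] (q : A → ℝ) : relEntropy q q = 0 := by
  simp [relEntropy]

section Gibbs

variable {S A : Type*} [Fintype A] [Nonempty A] {πref : S → A → ℝ} {s : S}

lemma partition_pos (hπ : ∀ a, 0 < πref s a) (β : ℝ) (g : S → A → ℝ) :
    0 < partition πref β g s :=
  sum_pos (fun a _ => mul_pos (hπ a) (Real.exp_pos _)) univ_nonempty

lemma gibbs_pos (hπ : ∀ a, 0 < πref s a) (β : ℝ) (g : S → A → ℝ) (a : A) :
    0 < gibbs πref β g s a :=
  div_pos (mul_pos (hπ a) (Real.exp_pos _)) (partition_pos hπ β g)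

lemma sum_gibbs (hπ : ∀ a, 0 < πref s a) (β : ℝ) (g : S → A → ℝ) :
    ∑ a, gibbs πref β g s a = 1 := by
  simp_rw [gibbs_eq_div_partition, ← sum_div]
  exact div_self (partition_pos hπ β g).ne'

lemma log_gibbs_div (hπ : ∀ a, 0 < πref s a) (β : ℝ) (g : S → A → ℝ) (a : A) :
    Real.log (gibbs πref β g s a / πref s a) = β * g s a - Real.log (partition πref β g s) := by
  have hratio : gibbs πref β g s a / πref s a = Real.exp (β * g s a) / partition πref β g s := by
    rw [gibbs_eq_div_partition]
    field_simp [(hπ a).ne']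
  rw [hratio, Real.log_div (Real.exp_pos _).ne' (partition_pos hπ β g).ne', Real.log_exp]

lemma gibbs_eq_gibbs_gibbs_sub (hπ : ∀ a, 0 < πref s a) (β : ℝ) (r g : S → A → ℝ) :
    gibbs πref β g s = gibbs (gibbs πref β r) β (g - r) s := by
  have hZ := partition_pos hπ β r
  have tilt : ∀ a, gibbs πref β r s a * Real.exp (β * (g - r) s a) =
      πref s a * Real.exp (β * g s a) / partition πref β r s := by
    intro a
    rw [gibbs_eq_div_partition, Pi.sub_apply, Pi.sub_apply, mul_sub, Real.exp_sub]
    field_simp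
  funext a
  rw [gibbs_eq_div_partition (gibbs πref β r), partition]
  simp_rw [tilt, ← sum_div]
  rw [div_div_div_cancel_right₀ hZ.ne', gibbs_eq_div_partition, partition]

lemma stateValue_eq {β : ℝ} (hβ : β ≠ 0) (hπ : ∀ a, 0 < πref s a) (r : S → A → ℝ) {ρ : S → A → ℝ}
    (hρ : ∀ a, 0 < ρ s a) (hρ1 : ∑ a, ρ s a = 1) :
    stateValue πref β r ρ s =
      β⁻¹ * (Real.log (partition πref β r s) - relEntropy (ρ s) (gibbs πref β r s)) := by
  have hsplit : ∀ a, Real.log (ρ s a / πref s a) = Real.log (ρ s a / gibbs πref β r s a)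
      + (β * r s a - Real.log (partition πref β r s)) := by
    intro a
    rw [← log_gibbs_div hπ, ← Real.log_mul (div_pos (hρ a) (gibbs_pos hπ β r a)).ne'
      (div_pos (gibbs_pos hπ β r a) (hπ a)).ne', div_mul_div_cancel₀ (gibbs_pos hπ β r a).ne']
  have hterm : ∀ a, ρ s a * (r s a - β⁻¹ * Real.log (ρ s a / πref s a)) =
      β⁻¹ * (ρ s a * Real.log (partition πref β r s)
        - ρ s a * Real.log (ρ s a / gibbs πref β r s a)) := by
    intro a
    rw [hsplit]
    field_simp
    ring
  simp only [stateValue, relEntropy, hterm, ← mul_sum, sum_sub_distrib, ← sum_mul, hρ1, one_mul]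

lemma stateValue_gibbs_sub {β : ℝ} (hβ : β ≠ 0) (hπ : ∀ a, 0 < πref s a) (r : S → A → ℝ)
    {ρ : S → A → ℝ} (hρ : ∀ a, 0 < ρ s a) (hρ1 : ∑ a, ρ s a = 1) :
    stateValue πref β r (gibbs πref β r) s - stateValue πref β r ρ s =
      β⁻¹ * relEntropy (ρ s) (gibbs πref β r s) := by
  rw [stateValue_eq hβ hπ r (gibbs_pos hπ β r) (sum_gibbs hπ β r), stateValue_eq hβ hπ r hρ hρ1,
    relEntropy_self]
  ring

lemma relEntropy_gibbs_le {β : ℝ} {p δ : S → A → ℝ} (hp : ∀ a, 0 < p s a) (hp1 : ∑ a, p s a = 1)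
    (hβ : 0 ≤ β) (hδ : ∀ a, δ s a ≤ 0) :
    relEntropy (gibbs p β δ s) (p s) ≤ β ^ 2 * ∑ a, p s a * δ s a ^ 2 := by
  have hKL : relEntropy (gibbs p β δ s) (p s) =
      (∑ a, p s a * (β * δ s a * Real.exp (β * δ s a))) / partition p β δ s
        - Real.log (partition p β δ s) := by
    simp only [relEntropy, log_gibbs_div hp, mul_sub, sum_sub_distrib, ← sum_mul, sum_gibbs hp,
      one_mul, sum_div]
    exact congrArg (· - _) (sum_congr rfl fun a _ => by rw [gibbs_eq_div_partition]; ring)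
  have hsq : β ^ 2 * ∑ a, p s a * δ s a ^ 2 = ∑ a, p s a * (β * δ s a) ^ 2 := by
    rw [mul_sum]
    exact sum_congr rfl fun a _ => by ring
  rw [hKL, hsq]
  exact sum_mul_exp_div_sub_log_le univ (fun a _ => (hp a).le) hp1
    (fun a _ => mul_nonpos_of_nonneg_of_nonpos hβ (hδ a))

lemma stateValue_gibbs_sub_gibbs_le {β : ℝ} (hβ : 0 < β) (hπ : ∀ a, 0 < πref s a) {r g : S → A → ℝ}
    (hpess : ∀ a, g s a ≤ r s a) :
    stateValue πref β r (gibbs πref β r) s - stateValue πref β r (gibbs πref β g) s ≤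
      β * ∑ a, gibbs πref β r s a * (g s a - r s a) ^ 2 := by
  rw [stateValue_gibbs_sub hβ.ne' hπ r (gibbs_pos hπ β g) (sum_gibbs hπ β g),
    gibbs_eq_gibbs_gibbs_sub hπ β r g]
  have hKL := relEntropy_gibbs_le (gibbs_pos hπ β r) (sum_gibbs hπ β r) hβ.le
    (δ := g - r) fun a => sub_nonpos.2 (hpess a)
  calc β⁻¹ * relEntropy (gibbs (gibbs πref β r) β (g - r) s) (gibbs πref β r s)
      ≤ β⁻¹ * (β ^ 2 * ∑ a, gibbs πref β r s a * (g s a - r s a) ^ 2) := by gcongr; exact hKL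
    _ = β * ∑ a, gibbs πref β r s a * (g s a - r s a) ^ 2 := by field_simp

end Gibbs

theorem stmt_16_general {S A : Type*} [Fintype S] [Fintype A] [Nonempty A]
    (d0 : S → ℝ) (hd0 : ∀ s, 0 ≤ d0 s)
    (πref : S → A → ℝ) (hπ : ∀ s a, 0 < πref s a)
    (β : ℝ) (hβ : 0 < β) (r g : S → A → ℝ)
    (hpess : ∀ s a, g s a ≤ r s a) :
    J d0 πref β r (gibbs πref β r) - J d0 πref β r (gibbs πref β g) ≤
      β * ∑ s, d0 s * ∑ a, gibbs πref β r s a * (g s a - r s a) ^ 2 := by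
  rw [J_eq_sum_stateValue, J_eq_sum_stateValue, ← sum_sub_distrib, mul_sum]
  refine sum_le_sum fun s _ => ?_
  rw [← mul_sub, mul_left_comm]
  exact mul_le_mul_of_nonneg_left (stateValue_gibbs_sub_gibbs_le hβ (hπ s) (hpess s)) (hd0 s)

theorem stmt_16 {S A : Type*} [Fintype S] [Fintype A] [Nonempty A]
    (d0 : S → ℝ) (hd0 : ∀ s, 0 ≤ d0 s) (hd0sum : ∑ s, d0 s = 1)
    (πref : S → A → ℝ) (hπ : ∀ s a, 0 < πref s a) (hπsum : ∀ s, ∑ a, πref s a = 1)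
    (β : ℝ) (hβ : 0 < β) (r g : S → A → ℝ)
    (hpess : ∀ s a, g s a ≤ r s a) :
    J d0 πref β r (gibbs πref β r) - J d0 πref β r (gibbs πref β g) ≤
      β * ∑ s, d0 s * ∑ a, gibbs πref β r s a * (g s a - r s a) ^ 2 :=
  stmt_16_general d0 hd0 πref hπ β hβ r g hpess
end

section
/- Fix a finite state set S with a probability distribution d0 on S, a finite action set A, a reference policy π_ref with π_ref(a|s) > 0 for all s, a, β > 0, and a true reward r : S × A → ℝ. Let g : S × A → ℝ satisfy the optimism condition g(s,a) ≥ r(s,a) for all (s,a). Let π_r and π_g be the Gibbs policies of r and g respectively, and let J denote the KL-regularized objective with reward r. Then J(π_r) − J(π_g) ≤ β · Σ_s d0(s) · Σ_a π_g(a|s) · (g(s,a) − r(s,a))². -/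
lemma exp_neg_le (x : ℝ) (hx : 0 ≤ x) : Real.exp (-x) ≤ 1 - x + x ^ 2 := by
  have h2 := Real.add_one_le_exp x
  have hp := Real.exp_pos x
  rw [Real.exp_neg x, inv_le_iff_one_le_mul₀ hp]
  nlinarith [mul_le_mul_of_nonneg_left h2 (by nlinarith [sq_nonneg (x-1)] : (0:ℝ) ≤ 1 - x + x ^ 2)]

section state
variable {A : Type*} [Fintype A] [Nonempty A]

lemma Zpos (w : A → ℝ) (hw : ∀ a, 0 < w a) (β : ℝ) (f : A → ℝ) :
    0 < ∑ a, w a * Real.exp (β * f a) :=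
  Finset.sum_pos (fun a _ => mul_pos (hw a) (Real.exp_pos _)) Finset.univ_nonempty

/-- Closed form for the per-state objective of a Gibbs policy. -/
lemma F_gibbs (w : A → ℝ) (hw : ∀ a, 0 < w a) (β : ℝ) (hβ : 0 < β) (r h : A → ℝ) :
    ∑ a, (w a * Real.exp (β * h a) / ∑ a', w a' * Real.exp (β * h a')) *
        (r a - β⁻¹ * Real.log ((w a * Real.exp (β * h a) / ∑ a', w a' * Real.exp (β * h a')) / w a))
      = (∑ a, (w a * Real.exp (β * h a) / ∑ a', w a' * Real.exp (β * h a')) * (r a - h a))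
        + β⁻¹ * Real.log (∑ a', w a' * Real.exp (β * h a')) := by
  set Z := ∑ a', w a' * Real.exp (β * h a') with hZ
  have hZpos : 0 < Z := Zpos w hw β h
  have hsum : ∑ a, w a * Real.exp (β * h a) / Z = 1 := by
    rw [← Finset.sum_div, ← hZ, div_self hZpos.ne']
  have key : ∀ a, (w a * Real.exp (β * h a) / Z) *
      (r a - β⁻¹ * Real.log ((w a * Real.exp (β * h a) / Z) / w a))
      = (w a * Real.exp (β * h a) / Z) * (r a - h a)
        + (w a * Real.exp (β * h a) / Z) * (β⁻¹ * Real.log Z) := by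
    intro a
    have hwa := hw a
    have hlog : Real.log ((w a * Real.exp (β * h a) / Z) / w a) = β * h a - Real.log Z := by
      rw [show (w a * Real.exp (β * h a) / Z) / w a = Real.exp (β * h a) / Z by
        field_simp]
      rw [Real.log_div (Real.exp_pos _).ne' hZpos.ne', Real.log_exp]
    rw [hlog]
    field_simp
    ring
  rw [Finset.sum_congr rfl (fun a _ => key a), Finset.sum_add_distrib, ← Finset.sum_mul, hsum,
    one_mul]

/-- The per-state inequality. -/
lemma state_key (w : A → ℝ) (hw : ∀ a, 0 < w a) (β : ℝ) (hβ : 0 < β)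
    (r g : A → ℝ) (hopt : ∀ a, r a ≤ g a) :
    (∑ a, (w a * Real.exp (β * r a) / ∑ a', w a' * Real.exp (β * r a')) *
        (r a - β⁻¹ * Real.log ((w a * Real.exp (β * r a) / ∑ a', w a' * Real.exp (β * r a')) / w a)))
    - (∑ a, (w a * Real.exp (β * g a) / ∑ a', w a' * Real.exp (β * g a')) *
        (r a - β⁻¹ * Real.log ((w a * Real.exp (β * g a) / ∑ a', w a' * Real.exp (β * g a')) / w a)))
    ≤ β * ∑ a, (w a * Real.exp (β * g a) / ∑ a', w a' * Real.exp (β * g a')) * (g a - r a) ^ 2 := by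
  set Zr := ∑ a', w a' * Real.exp (β * r a') with hZr
  set Zg := ∑ a', w a' * Real.exp (β * g a') with hZg
  have hZrpos : 0 < Zr := Zpos w hw β r
  have hZgpos : 0 < Zg := Zpos w hw β g
  set p : A → ℝ := fun a => w a * Real.exp (β * g a) / Zg with hp
  have hppos : ∀ a, 0 < p a := fun a => div_pos (mul_pos (hw a) (Real.exp_pos _)) hZgpos
  have hpsum : ∑ a, p a = 1 := by
    rw [hp]; simp only []; rw [← Finset.sum_div, ← hZg, div_self hZgpos.ne']
  rw [F_gibbs w hw β hβ r r, F_gibbs w hw β hβ r g]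
  simp only [sub_self, mul_zero, zero_mul, Finset.sum_const_zero, zero_add]
  rw [← hZg, ← hZr]
  -- LHS = β⁻¹ log Zr - (∑ p (r - g) + β⁻¹ log Zg)
  set E := ∑ a, p a * (g a - r a) with hE
  set Q := ∑ a, p a * (g a - r a) ^ 2 with hQ
  have hEnonneg : 0 ≤ E := Finset.sum_nonneg fun a _ =>
    mul_nonneg (hppos a).le (sub_nonneg.2 (hopt a))
  have hrg : ∑ a, p a * (r a - g a) = -E := by
    rw [hE, ← Finset.sum_neg_distrib]; congr 1; ext a; ring
  -- Zr = Zg * T where T = ∑ p a * exp(-β(g-r))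
  set T := ∑ a, p a * Real.exp (-(β * (g a - r a))) with hT
  have hTpos : 0 < T := Finset.sum_pos (fun a _ => mul_pos (hppos a) (Real.exp_pos _))
    Finset.univ_nonempty
  have hZrT : Zr = Zg * T := by
    rw [hT, hZr, Finset.mul_sum]
    congr 1; ext a
    rw [hp]
    have : Real.exp (β * r a) = Real.exp (β * g a) * Real.exp (-(β * (g a - r a))) := by
      rw [← Real.exp_add]; ring_nf
    rw [this]
    field_simp
  have hTle : T ≤ 1 - β * E + β ^ 2 * Q := by
    have : T ≤ ∑ a, p a * (1 - β * (g a - r a) + (β * (g a - r a)) ^ 2) := by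
      apply Finset.sum_le_sum
      intro a _
      exact mul_le_mul_of_nonneg_left
        (exp_neg_le _ (mul_nonneg hβ.le (sub_nonneg.2 (hopt a)))) (hppos a).le
    calc T ≤ ∑ a, p a * (1 - β * (g a - r a) + (β * (g a - r a)) ^ 2) := this
      _ = (∑ a, p a) - β * E + β ^ 2 * Q := by
          rw [hE, hQ, Finset.mul_sum, Finset.mul_sum]
          rw [← Finset.sum_sub_distrib, ← Finset.sum_add_distrib]
          congr 1; ext a; ring
      _ = 1 - β * E + β ^ 2 * Q := by rw [hpsum]
  have hlogT : Real.log T ≤ -(β * E) + β ^ 2 * Q := by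
    have := Real.log_le_sub_one_of_pos hTpos
    linarith
  have hlogZr : Real.log Zr = Real.log Zg + Real.log T := by
    rw [hZrT, Real.log_mul hZgpos.ne' hTpos.ne']
  rw [hrg, hlogZr]
  have hQnn : 0 ≤ Q := Finset.sum_nonneg fun a _ => mul_nonneg (hppos a).le (sq_nonneg _)
  have h1 : β⁻¹ * Real.log T ≤ -E + β * Q := by
    have := mul_le_mul_of_nonneg_left hlogT (inv_nonneg.2 hβ.le)
    calc β⁻¹ * Real.log T ≤ β⁻¹ * (-(β * E) + β ^ 2 * Q) := this
      _ = -E + β * Q := by field_simp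
  linarith [h1]
end state

theorem stmt_17 {S A : Type*} [Fintype S] [Fintype A] [Nonempty A]
    (d0 : S → ℝ) (hd0 : ∀ s, 0 ≤ d0 s) (hd0sum : ∑ s, d0 s = 1)
    (πref : S → A → ℝ) (hπ : ∀ s a, 0 < πref s a) (hπsum : ∀ s, ∑ a, πref s a = 1)
    (β : ℝ) (hβ : 0 < β) (r g : S → A → ℝ)
    (hopt : ∀ s a, r s a ≤ g s a) :
    J d0 πref β r (gibbs πref β r) - J d0 πref β r (gibbs πref β g) ≤
      β * ∑ s, d0 s * ∑ a, gibbs πref β g s a * (g s a - r s a) ^ 2 := by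
  unfold J gibbs
  rw [← Finset.sum_sub_distrib, Finset.mul_sum]
  apply Finset.sum_le_sum
  intro s _
  rw [← mul_sub, mul_left_comm]
  exact mul_le_mul_of_nonneg_left (state_key (πref s) (hπ s) β hβ (r s) (g s) (hopt s)) (hd0 s)
end
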